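/- Let x and y be n-dimensional probability vectors and let m and n' be any two fixed positive integers. Then x^{⊗m} ≺_T y^{⊗m} if and only if x^{⊗n'} ≺_T y^{⊗n'}. Here u ≺_T v means u ⊗ c ≺ v ⊗ c for some probability vector c. -/
import Mathlib


open Finset

variable {ι κ : Type*}

/-- `eSum x l` is the sum of the `l` largest components of `x`. -/
noncomputable def eSum [Fintype ι] (x : ι → ℝ) (l : ℕ) : ℝ :=
  sSup {r : ℝ | ∃ s : Finset ι, s.card = l ∧ r = ∑ i ∈ s, x i}

/-- Majorization `x ≺ y` for vectors over the same (finite) index type: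
`e_l(x) ≤ e_l(y)` for all `1 ≤ l ≤ n - 1`, with equal total sums. -/
def Maj [Fintype ι] (x y : ι → ℝ) : Prop :=
  (∀ l : ℕ, 1 ≤ l → l < Fintype.card ι → eSum x l ≤ eSum y l) ∧
    ∑ i, x i = ∑ i, y i

/-- A probability vector: nonnegative components summing to 1. -/
def IsProbVec [Fintype ι] (x : ι → ℝ) : Prop :=
  (∀ i, 0 ≤ x i) ∧ ∑ i, x i = 1

/-- Kronecker product of two vectors. -/
def kron (x : ι → ℝ) (c : κ → ℝ) : ι × κ → ℝ := fun p => x p.1 * c p.2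

/-- `k`-fold Kronecker power of a vector. -/
def kpow (x : ι → ℝ) (k : ℕ) : (Fin k → ι) → ℝ := fun f => ∏ j, x (f j)

/-- Direct sum (concatenation) of two vectors. -/
def dsum (x : ι → ℝ) (c : κ → ℝ) : ι ⊕ κ → ℝ := Sum.elim x c

/-- `k`-fold direct sum (concatenation) of `x` with itself. -/
def dpow (x : ι → ℝ) (k : ℕ) : Fin k × ι → ℝ := fun p => x p.2

/-- `x ∈ S°(y)`: all partial-sum inequalities `e_l(x) < e_l(y)` are strict for
`1 ≤ l ≤ n - 1`, and the total sums coincide. -/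
def InteriorS [Fintype ι] (x y : ι → ℝ) : Prop :=
  (∀ l : ℕ, 1 ≤ l → l < Fintype.card ι → eSum x l < eSum y l) ∧
    ∑ i, x i = ∑ i, y i

/-- `d_x`: the number of nonzero components of `x`. -/
noncomputable def dsupp (x : ι → ℝ) : ℕ := Nat.card (Function.support x)

/-- The `α`-Renyi entropy `S^{(α)}(x)`; at `α = 1` it is the Shannon entropy. -/
noncomputable def renyi [Fintype ι] (x : ι → ℝ) (α : ℝ) : ℝ :=
  if α = 1 then -∑ i, x i * Real.logb 2 (x i)
  else (if 0 ≤ α then (1 : ℝ) else -1) / (1 - α) *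
    Real.logb 2 (∑ i, if x i = 0 then 0 else x i ^ α)

/-- The Renyi entropy of `x` is not less than that of `y`. -/
def RenyiGE [Fintype ι] [Fintype κ] (x : ι → ℝ) (y : κ → ℝ) : Prop :=
  (dsupp x > dsupp y ∧ ∀ α : ℝ, 0 ≤ α → renyi y α ≤ renyi x α) ∨
  (dsupp x = dsupp y ∧ ∀ α : ℝ, renyi y α ≤ renyi x α)

-- level function
noncomputable def lvl [Fintype ι] (a : ι → ℝ) (t : ℝ) : ℝ := ∑ i, max (a i - t) 0

section ESum
variable [Fintype ι] (x : ι → ℝ) (l : ℕ)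

lemma eSum_set_finite : {r : ℝ | ∃ s : Finset ι, s.card = l ∧ r = ∑ i ∈ s, x i}.Finite := by
  apply Set.Finite.subset (Set.finite_range (fun s : Finset ι => ∑ i ∈ s, x i))
  rintro r ⟨s, -, rfl⟩; exact ⟨s, rfl⟩

lemma le_eSum {s : Finset ι} (h : s.card = l) : ∑ i ∈ s, x i ≤ eSum x l :=
  le_csSup (eSum_set_finite x l).bddAbove ⟨s, h, rfl⟩

lemma eSum_attained (h : l ≤ Fintype.card ι) :
    ∃ s : Finset ι, s.card = l ∧ eSum x l = ∑ i ∈ s, x i := by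
  have hne : {r : ℝ | ∃ s : Finset ι, s.card = l ∧ r = ∑ i ∈ s, x i}.Nonempty := by
    obtain ⟨s, -, hs⟩ := Finset.exists_subset_card_eq (show l ≤ (univ : Finset ι).card by
      simpa using h)
    exact ⟨∑ i ∈ s, x i, s, hs, rfl⟩
  exact hne.csSup_mem (eSum_set_finite x l)

lemma eSum_zero : eSum x 0 = 0 := by
  obtain ⟨s, hs, he⟩ := eSum_attained x 0 (Nat.zero_le _)
  rw [he, Finset.card_eq_zero.mp hs, Finset.sum_empty]

lemma eSum_card : eSum x (Fintype.card ι) = ∑ i, x i := by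
  obtain ⟨s, hs, he⟩ := eSum_attained x _ le_rfl
  rw [he, (Finset.card_eq_iff_eq_univ s).mp hs]

lemma exists_topFinset (h : l ≤ Fintype.card ι) :
    ∃ s : Finset ι, s.card = l ∧ ∀ i ∈ s, ∀ j ∉ s, x j ≤ x i := by
  classical
  induction l with
  | zero => exact ⟨∅, rfl, by simp⟩
  | succ l ih =>
    obtain ⟨s, hcard, htop⟩ := ih (Nat.le_of_succ_le h)
    have hco : (univ \ s).Nonempty := by
      rw [← Finset.card_pos, Finset.card_sdiff_of_subset (Finset.subset_univ s)]
      simp only [Finset.card_univ]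
      omega
    obtain ⟨j0, hj0, hj0max⟩ := Finset.exists_max_image _ x hco
    have hj0s : j0 ∉ s := (Finset.mem_sdiff.mp hj0).2
    refine ⟨insert j0 s, by rw [Finset.card_insert_of_notMem hj0s, hcard], ?_⟩
    intro i hi j hj
    have hjs : j ∉ s := fun hjs => hj (Finset.mem_insert_of_mem hjs)
    have hjj0 : x j ≤ x j0 := hj0max j (Finset.mem_sdiff.mpr ⟨Finset.mem_univ _, hjs⟩)
    rcases Finset.mem_insert.mp hi with rfl | hi
    · exact hjj0
    · exact htop i hi j hjs

end ESum

section LvlMaj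
variable [Fintype ι] {a b : ι → ℝ}

lemma maj_lvl_le (h : Maj a b) (t : ℝ) : lvl a t ≤ lvl b t := by
  classical
  set k := (univ.filter (fun i => t < a i)).card with hk
  have hkle : k ≤ Fintype.card ι := by
    rw [hk]; simpa using Finset.card_le_card (Finset.subset_univ _)
  have h1 : lvl a t = ∑ i ∈ univ.filter (fun i => t < a i), a i - k * t := by
    have : lvl a t = ∑ i ∈ univ.filter (fun i => t < a i), (a i - t) := by
      rw [lvl, Finset.sum_filter]
      refine Finset.sum_congr rfl (fun i _ => ?_)
      rcases le_or_gt (a i) t with h' | h'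
      · simp [max_eq_right (sub_nonpos.mpr h'), not_lt.mpr h']
      · simp [max_eq_left (sub_nonneg.mpr h'.le), h']
    rw [this, Finset.sum_sub_distrib, Finset.sum_const, ← hk, nsmul_eq_mul]
  have h2 : ∑ i ∈ univ.filter (fun i => t < a i), a i ≤ eSum a k := le_eSum a k rfl
  have h3 : eSum a k ≤ eSum b k := by
    rcases Nat.eq_zero_or_pos k with hk0 | hk1
    · rw [hk0, eSum_zero, eSum_zero]
    rcases eq_or_lt_of_le hkle with heq | hlt
    · rw [heq, eSum_card, eSum_card, h.2]
    · exact h.1 k hk1 hlt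
  have h4 : eSum b k - k * t ≤ lvl b t := by
    obtain ⟨s, hcard, he⟩ := eSum_attained b k hkle
    rw [he, lvl]
    have : ∑ i ∈ s, b i - (k : ℝ) * t = ∑ i ∈ s, (b i - t) := by
      rw [Finset.sum_sub_distrib, Finset.sum_const, hcard, nsmul_eq_mul]
    rw [this]
    calc ∑ i ∈ s, (b i - t) ≤ ∑ i ∈ s, max (b i - t) 0 :=
          Finset.sum_le_sum (fun i _ => le_max_left _ _)
      _ ≤ ∑ i, max (b i - t) 0 :=
          Finset.sum_le_sum_of_subset_of_nonneg (Finset.subset_univ s)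
            (fun i _ _ => le_max_right _ _)
  linarith

lemma lvl_maj (hsum : ∑ i, a i = ∑ i, b i) (hlvl : ∀ t, lvl a t ≤ lvl b t) :
    Maj a b := by
  classical
  refine ⟨fun l hl1 hl2 => ?_, hsum⟩
  obtain ⟨sb, hbcard, hbtop⟩ := exists_topFinset b l hl2.le
  have hbne : sb.Nonempty := Finset.card_pos.mp (by omega)
  obtain ⟨i0, hi0, hi0min⟩ := Finset.exists_min_image sb b hbne
  set t := b i0 with ht
  have hlvlb : lvl b t = ∑ i ∈ sb, b i - l * t := by
    rw [lvl]
    have : ∀ i : ι, max (b i - t) 0 = if i ∈ sb then b i - t else 0 := by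
      intro i
      by_cases hi : i ∈ sb
      · simp [hi, max_eq_left (sub_nonneg.mpr (hi0min i hi))]
      · have : b i ≤ t := hbtop i0 hi0 i hi
        simp [hi, max_eq_right (sub_nonpos.mpr this)]
    rw [Finset.sum_congr rfl (fun i _ => this i), Finset.sum_ite_mem, Finset.univ_inter,
      Finset.sum_sub_distrib, Finset.sum_const, hbcard, nsmul_eq_mul]
  -- eSum a l ≤ l*t + lvl a t
  obtain ⟨sa, hacard, hae⟩ := eSum_attained a l hl2.le
  have h5 : eSum a l ≤ l * t + lvl a t := by
    rw [hae, lvl]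
    have : ∑ i ∈ sa, a i ≤ ∑ i ∈ sa, (t + max (a i - t) 0) :=
      Finset.sum_le_sum (fun i _ => by
        have := le_max_left (a i - t) 0
        linarith)
    rw [Finset.sum_add_distrib, Finset.sum_const, hacard, nsmul_eq_mul] at this
    have h6 : ∑ i ∈ sa, max (a i - t) 0 ≤ ∑ i, max (a i - t) 0 :=
      Finset.sum_le_sum_of_subset_of_nonneg (Finset.subset_univ sa)
        (fun i _ _ => le_max_right _ _)
    linarith
  have h7 : ∑ i ∈ sb, b i ≤ eSum b l := le_eSum b l hbcard
  have := hlvl t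
  linarith

lemma maj_iff : Maj a b ↔ (∑ i, a i = ∑ i, b i ∧ ∀ t, lvl a t ≤ lvl b t) :=
  ⟨fun h => ⟨h.2, maj_lvl_le h⟩, fun h => lvl_maj h.1 h.2⟩

end LvlMaj

section LvlCalc
variable {σ τ : Type*} [Fintype σ] [Fintype τ]

lemma lvl_comp_equiv [Fintype ι] (a : ι → ℝ) (e : κ ≃ ι) [Fintype κ] (t : ℝ) :
    lvl (a ∘ e) t = lvl a t := by
  rw [lvl, lvl]
  exact Equiv.sum_comp e (fun i => max (a i - t) 0)

lemma lvl_congr [Fintype ι] {a b : ι → ℝ} (h : ∀ i, a i = b i) (t : ℝ) :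
    lvl a t = lvl b t := by
  rw [lvl, lvl]; exact Finset.sum_congr rfl (fun i _ => by rw [h i])

lemma lvl_mul_const [Fintype ι] (a : ι → ℝ) {v : ℝ} (hv : 0 < v) (t : ℝ) :
    lvl (fun i => a i * v) t = v * lvl a (t / v) := by
  rw [lvl, lvl, Finset.mul_sum]
  refine Finset.sum_congr rfl (fun i _ => ?_)
  rw [mul_max_of_nonneg _ _ hv.le]
  congr 1
  field_simp
  ring

lemma lvl_prod_snd (F : σ × τ → ℝ) (t : ℝ) :
    lvl F t = ∑ j : τ, lvl (fun s => F (s, j)) t := by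
  rw [lvl]
  rw [Fintype.sum_prod_type_right]
  rfl

lemma lvl_kron_le {A B : σ → ℝ} (r : τ → ℝ) (hr : ∀ j, 0 ≤ r j)
    (h : ∀ t, lvl A t ≤ lvl B t) (t : ℝ) :
    lvl (kron A r) t ≤ lvl (kron B r) t := by
  rw [lvl_prod_snd, lvl_prod_snd]
  refine Finset.sum_le_sum (fun j _ => ?_)
  rcases eq_or_lt_of_le (hr j) with hj | hj
  · apply le_of_eq
    apply lvl_congr
    intro i; simp [kron, ← hj]
  · have h1 : lvl (fun s => kron A r (s, j)) t = r j * lvl A (t / r j) :=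
      lvl_mul_const A hj t
    have h2 : lvl (fun s => kron B r (s, j)) t = r j * lvl B (t / r j) :=
      lvl_mul_const B hj t
    rw [h1, h2]
    exact mul_le_mul_of_nonneg_left (h _) hj.le

lemma sum_kron (a : σ → ℝ) (c : τ → ℝ) :
    ∑ p, kron a c p = (∑ i, a i) * (∑ j, c j) := by
  rw [Fintype.sum_prod_type, Finset.sum_mul]
  exact Finset.sum_congr rfl (fun i _ => by rw [Finset.mul_sum]; rfl)

lemma sum_kpow [Fintype ι] (x : ι → ℝ) (k : ℕ) :
    ∑ f, kpow x k f = (∑ i, x i) ^ k := by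
  classical
  rw [show ((∑ i, x i) ^ k) = ∏ _j : Fin k, ∑ i, x i by
    rw [Finset.prod_const, Finset.card_univ, Fintype.card_fin]]
  rw [show (∏ _j : Fin k, ∑ i, x i) = ∑ g ∈ Fintype.piFinset (fun _ : Fin k => univ),
      ∏ j : Fin k, x (g j) from Finset.prod_univ_sum _ _]
  rw [Fintype.piFinset_univ]
  rfl

lemma maj_comp_equiv [Fintype ι] [Fintype κ] {a b : ι → ℝ} (h : Maj a b) (e : κ ≃ ι) :
    Maj (a ∘ e) (b ∘ e) := by
  rw [maj_iff] at h ⊢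
  refine ⟨?_, fun t => ?_⟩
  · show ∑ i, a (e i) = ∑ i, b (e i)
    rw [Equiv.sum_comp e a, Equiv.sum_comp e b]; exact h.1
  · rw [lvl_comp_equiv, lvl_comp_equiv]; exact h.2 t

end LvlCalc

section Mix
variable [Fintype ι]

/-- Hybrid vector: first `j` tensor factors are `x`, the rest are `y`. -/
def mix (x y : ι → ℝ) (k j : ℕ) : (Fin k → ι) → ℝ :=
  fun f => ∏ i : Fin k, if (i : ℕ) < j then x (f i) else y (f i)

lemma mix_zero (x y : ι → ℝ) (k : ℕ) : mix x y k 0 = kpow y k := by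
  funext f; simp [mix, kpow]

lemma mix_top (x y : ι → ℝ) (k : ℕ) : mix x y k k = kpow x k := by
  funext f
  exact Finset.prod_congr rfl (fun i _ => by simp [i.isLt])

/-- The common "rest" factor at position `j`. -/
def rest (x y : ι → ℝ) {k : ℕ} (j : Fin k) : ({i : Fin k // i ≠ j} → ι) → ℝ :=
  fun g => ∏ i : {i : Fin k // i ≠ j}, if ((i : Fin k) : ℕ) < (j : ℕ) then x (g i) else y (g i)

lemma rest_nonneg {x y : ι → ℝ} (hx : ∀ i, 0 ≤ x i) (hy : ∀ i, 0 ≤ y i)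
    {k : ℕ} (j : Fin k) (g : {i : Fin k // i ≠ j} → ι) : 0 ≤ rest x y j g :=
  Finset.prod_nonneg (fun i _ => by by_cases h : ((i : Fin k) : ℕ) < (j : ℕ) <;> simp [h, hx _, hy _])

lemma mix_succ_eq (x y : ι → ℝ) {k : ℕ} (j : Fin k) (f : Fin k → ι) :
    mix x y k ((j : ℕ) + 1) f = x (f j) * rest x y j (fun i => f i) := by
  rw [mix, ← Finset.mul_prod_erase univ _ (Finset.mem_univ j)]
  congr 1
  · simp
  · rw [Finset.prod_subtype (p := fun i => i ≠ j) (univ.erase j)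
      (fun i => by simp [Finset.mem_erase]) (fun i => if (i : ℕ) < (j : ℕ) + 1 then x (f i) else y (f i))]
    refine Finset.prod_congr rfl (fun i _ => ?_)
    have hne : ((i : Fin k) : ℕ) ≠ (j : ℕ) := fun h => i.2 (Fin.val_injective h)
    by_cases hlt : ((i : Fin k) : ℕ) < (j : ℕ)
    · rw [if_pos hlt, if_pos (by omega)]
    · rw [if_neg hlt, if_neg (by omega)]

lemma mix_val_eq (x y : ι → ℝ) {k : ℕ} (j : Fin k) (f : Fin k → ι) :
    mix x y k (j : ℕ) f = y (f j) * rest x y j (fun i => f i) := by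
  rw [mix, ← Finset.mul_prod_erase univ _ (Finset.mem_univ j)]
  congr 1
  · simp
  · rw [Finset.prod_subtype (p := fun i => i ≠ j) (univ.erase j)
      (fun i => by simp [Finset.mem_erase]) (fun i => if (i : ℕ) < (j : ℕ) then x (f i) else y (f i))]
    rfl

end Mix

section Lift
variable [Fintype ι] {x y : ι → ℝ} {p : ℕ} {c : Fin p → ℝ}

lemma funSplitAt_apply {k : ℕ} (j : Fin k) (f : Fin k → ι) :
    Equiv.funSplitAt j ι f = (f j, fun i : {i : Fin k // i ≠ j} => f i) := rfl

lemma step_lvl (hx : ∀ i, 0 ≤ x i) (hy : ∀ i, 0 ≤ y i)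
    (hlvl : ∀ t, lvl (kron x c) t ≤ lvl (kron y c) t) {k : ℕ} (j : Fin k) (t : ℝ) :
    lvl (kron (mix x y k ((j : ℕ) + 1)) c) t ≤ lvl (kron (mix x y k (j : ℕ)) c) t := by
  classical
  set G := ({i : Fin k // i ≠ j} → ι)
  set R : G → ℝ := rest x y j with hR
  have hRn : ∀ g, 0 ≤ R g := rest_nonneg hx hy j
  have h2 := lvl_kron_le (A := kron x c) (B := kron y c) R hRn hlvl
  set E : ((Fin k → ι) × Fin p) ≃ ((ι × Fin p) × G) :=
    ((Equiv.funSplitAt j ι).prodCongr (Equiv.refl (Fin p))).trans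
      ((Equiv.prodAssoc ι G (Fin p)).trans
        (((Equiv.refl ι).prodCongr (Equiv.prodComm G (Fin p))).trans
          (Equiv.prodAssoc ι (Fin p) G).symm)) with hE
  have hEapp : ∀ (f : Fin k → ι) (q : Fin p),
      E (f, q) = ((f j, q), fun i : {i : Fin k // i ≠ j} => f i) := fun f q => rfl
  have hx' : lvl (kron (mix x y k ((j : ℕ) + 1)) c) t = lvl (kron (kron x c) R) t := by
    rw [← lvl_comp_equiv (kron (kron x c) R) E t]
    apply lvl_congr
    rintro ⟨f, q⟩
    show mix x y k ((j : ℕ) + 1) f * c q = (kron (kron x c) R) (E (f, q))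
    rw [hEapp, mix_succ_eq]
    show x (f j) * rest x y j _ * c q = x (f j) * c q * R _
    rw [hR]; ring
  have hy' : lvl (kron (mix x y k (j : ℕ)) c) t = lvl (kron (kron y c) R) t := by
    rw [← lvl_comp_equiv (kron (kron y c) R) E t]
    apply lvl_congr
    rintro ⟨f, q⟩
    show mix x y k (j : ℕ) f * c q = (kron (kron y c) R) (E (f, q))
    rw [hEapp, mix_val_eq]
    show y (f j) * rest x y j _ * c q = y (f j) * c q * R _
    rw [hR]; ring
  rw [hx', hy']
  exact h2 t

lemma chain_le (F : ℕ → ℝ) : ∀ k : ℕ, (∀ j < k, F (j + 1) ≤ F j) → F k ≤ F 0 := by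
  intro k
  induction k with
  | zero => intro _; exact le_rfl
  | succ k ih =>
    intro h
    exact le_trans (h k (Nat.lt_succ_self k)) (ih (fun j hj => h j (Nat.lt_succ_of_lt hj)))

lemma lift (hx : IsProbVec x) (hy : IsProbVec y) (hc : IsProbVec c)
    (h : Maj (kron x c) (kron y c)) (k : ℕ) :
    Maj (kron (kpow x k) c) (kron (kpow y k) c) := by
  rw [maj_iff] at h ⊢
  refine ⟨?_, fun t => ?_⟩
  · rw [sum_kron, sum_kron, sum_kpow, sum_kpow, hx.2, hy.2]
  · have hstep : ∀ j < k, lvl (kron (mix x y k (j + 1)) c) t ≤ lvl (kron (mix x y k j) c) t := by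
      intro j hj
      exact step_lvl hx.1 hy.1 h.2 (⟨j, hj⟩ : Fin k) t
    have hchain := chain_le (fun j => lvl (kron (mix x y k j) c) t) k hstep
    rw [mix_top, mix_zero] at hchain
    exact hchain

end Lift

section Reduce
variable [Fintype ι] {x y : ι → ℝ} {p k : ℕ} {c : Fin p → ℝ}

lemma lvl_sigma {J : Type*} [Fintype J] {B : J → Type*} [∀ j, Fintype (B j)]
    (F : (Σ j, B j) → ℝ) (t : ℝ) :
    lvl F t = ∑ j, lvl (fun b => F ⟨j, b⟩) t := by
  rw [lvl, ← Finset.univ_sigma_univ, Finset.sum_sigma]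
  rfl

lemma sum_prod_pi {S : Type*} [Fintype S] [DecidableEq S] (F : S → ι → ℝ) :
    ∑ g : S → ι, ∏ i, F i (g i) = ∏ i, ∑ a : ι, F i a := by
  rw [Finset.prod_univ_sum, Fintype.piFinset_univ]

lemma sum_rest (hx : IsProbVec x) (hy : IsProbVec y) (j : Fin k) :
    ∑ g : ({i : Fin k // i ≠ j} → ι), rest x y j g = 1 := by
  classical
  set F : {i : Fin k // i ≠ j} → ι → ℝ :=
    fun i a => if ((i : Fin k) : ℕ) < (j : ℕ) then x a else y a with hF
  have : ∀ g : ({i : Fin k // i ≠ j} → ι), rest x y j g =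
      ∏ i : {i : Fin k // i ≠ j}, F i (g i) := by
    intro g
    rfl
  rw [Finset.sum_congr rfl (fun g _ => this g), sum_prod_pi]
  rw [hF]
  rw [Finset.prod_congr rfl (fun i (_ : i ∈ univ) => by
    by_cases h : ((i : Fin k) : ℕ) < (j : ℕ)
    · simp only [h, if_true]; exact hx.2
    · simp only [h, if_false]; exact hy.2)]
  rw [Finset.prod_const_one]

/-- The catalyst used to reduce `k` copies to one copy. -/
noncomputable def dvec (x y : ι → ℝ) (k p : ℕ) (c : Fin p → ℝ) :
    ((Σ j : Fin k, ({i : Fin k // i ≠ j} → ι)) × Fin p) → ℝ :=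
  fun w => (1 / k) * rest x y w.1.1 w.1.2 * c w.2

lemma dvec_prob (hx : IsProbVec x) (hy : IsProbVec y) (hc : IsProbVec c) (hk : 1 ≤ k) :
    IsProbVec (dvec x y k p c) := by
  constructor
  · rintro ⟨⟨j, g⟩, q⟩
    have h1 : (0:ℝ) ≤ 1 / k := by positivity
    exact mul_nonneg (mul_nonneg h1 (rest_nonneg hx.1 hy.1 j g)) (hc.1 q)
  · rw [Fintype.sum_prod_type]
    have : ∀ w : (Σ j : Fin k, ({i : Fin k // i ≠ j} → ι)),
        ∑ q, dvec x y k p c (w, q) = (1 / k) * rest x y w.1 w.2 := by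
      rintro ⟨j, g⟩
      rw [show ∑ q, dvec x y k p c (⟨j, g⟩, q) = ∑ q, (1/k) * rest x y j g * c q from rfl,
        ← Finset.mul_sum, hc.2, mul_one]
    rw [Finset.sum_congr rfl (fun w _ => this w), ← Finset.univ_sigma_univ, Finset.sum_sigma]
    have : ∀ j : Fin k, ∑ g : ({i : Fin k // i ≠ j} → ι), (1/(k:ℝ)) * rest x y j g = 1/k := by
      intro j
      rw [← Finset.mul_sum, sum_rest hx hy j, mul_one]
    rw [Finset.sum_congr rfl (fun j _ => this j), Finset.sum_const, Finset.card_univ,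
      Fintype.card_fin, nsmul_eq_mul]
    field_simp

lemma reduce_maj (hx : IsProbVec x) (hy : IsProbVec y) (hc : IsProbVec c) (hk : 1 ≤ k)
    (h : Maj (kron (kpow x k) c) (kron (kpow y k) c)) :
    Maj (kron x (dvec x y k p c)) (kron y (dvec x y k p c)) := by
  classical
  have hd := dvec_prob hx hy hc hk
  rw [maj_iff] at h ⊢
  refine ⟨by rw [sum_kron, sum_kron, hx.2, hy.2, hd.2], fun t => ?_⟩
  set G : Fin k → Type _ := fun j => ({i : Fin k // i ≠ j} → ι) with hG
  set E' : (Σ j : Fin k, ((Fin k → ι) × Fin p)) ≃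
      (ι × ((Σ j : Fin k, G j) × Fin p)) :=
    (Equiv.sigmaCongrRight (fun j =>
      (Equiv.prodCongr (Equiv.funSplitAt j ι) (Equiv.refl (Fin p))).trans
        (Equiv.prodAssoc ι (G j) (Fin p)))).trans
    ((Equiv.sigmaCongrRight (fun j => Equiv.prodComm ι (G j × Fin p))).trans
      (((Equiv.sigmaProdDistrib (fun j => G j × Fin p) ι).symm).trans
        ((Equiv.prodComm _ ι).trans
          ((Equiv.refl ι).prodCongr (Equiv.sigmaProdDistrib (fun j => G j) (Fin p)).symm))))
    with hE'
  have hE'app : ∀ (j : Fin k) (f : Fin k → ι) (q : Fin p),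
      E' ⟨j, (f, q)⟩ = (f j, (⟨j, fun i => f i⟩, q)) := fun j f q => rfl
  have hkpos : (0:ℝ) < 1 / k := by positivity
  -- slice computation for the x side
  have hxslice : lvl (kron x (dvec x y k p c)) t =
      ∑ j : Fin k, (1/(k:ℝ)) * lvl (kron (mix x y k ((j:ℕ)+1)) c) (t / (1/k)) := by
    rw [← lvl_comp_equiv (kron x (dvec x y k p c)) E' t, lvl_sigma]
    refine Finset.sum_congr rfl (fun j _ => ?_)
    rw [← lvl_mul_const (kron (mix x y k ((j:ℕ)+1)) c) hkpos t]
    apply lvl_congr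
    rintro ⟨f, q⟩
    show kron x (dvec x y k p c) (E' ⟨j, (f, q)⟩) = _
    rw [hE'app]
    show x (f j) * ((1/(k:ℝ)) * rest x y j (fun i => f i) * c q)
      = kron (mix x y k ((j:ℕ)+1)) c (f, q) * (1/k)
    show _ = mix x y k ((j:ℕ)+1) f * c q * (1/(k:ℝ))
    rw [mix_succ_eq]
    ring
  have hyslice : lvl (kron y (dvec x y k p c)) t =
      ∑ j : Fin k, (1/(k:ℝ)) * lvl (kron (mix x y k (j:ℕ)) c) (t / (1/k)) := by
    rw [← lvl_comp_equiv (kron y (dvec x y k p c)) E' t, lvl_sigma]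
    refine Finset.sum_congr rfl (fun j _ => ?_)
    rw [← lvl_mul_const (kron (mix x y k (j:ℕ)) c) hkpos t]
    apply lvl_congr
    rintro ⟨f, q⟩
    show kron y (dvec x y k p c) (E' ⟨j, (f, q)⟩) = _
    rw [hE'app]
    show y (f j) * ((1/(k:ℝ)) * rest x y j (fun i => f i) * c q)
      = kron (mix x y k (j:ℕ)) c (f, q) * (1/k)
    show _ = mix x y k (j:ℕ) f * c q * (1/(k:ℝ))
    rw [mix_val_eq]
    ring
  rw [hxslice, hyslice]
  set s := t / (1/(k:ℝ)) with hs
  set L : ℕ → ℝ := fun j => lvl (kron (mix x y k j) c) s with hL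
  have h1 : ∑ j : Fin k, (1/(k:ℝ)) * L ((j:ℕ)+1) ≤ ∑ j : Fin k, (1/(k:ℝ)) * L (j:ℕ) := by
    rw [Fin.sum_univ_eq_sum_range (fun j => (1/(k:ℝ)) * L (j+1)),
      Fin.sum_univ_eq_sum_range (fun j => (1/(k:ℝ)) * L j)]
    have htel : ∑ j ∈ Finset.range k, (L (j+1) - L j) = L k - L 0 := Finset.sum_range_sub L k
    have hlk : L k ≤ L 0 := by
      rw [hL]
      dsimp only
      rw [mix_top, mix_zero]
      exact h.2 s
    rw [Finset.sum_sub_distrib] at htel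
    rw [← Finset.mul_sum, ← Finset.mul_sum]
    apply mul_le_mul_of_nonneg_left _ hkpos.le
    linarith
  exact h1

end Reduce

lemma transport [Fintype ι] {κ' : Type*} [Fintype κ'] (X Y : ι → ℝ) (d : κ' → ℝ)
    (hd : IsProbVec d) (h : Maj (kron X d) (kron Y d)) :
    ∃ (p : ℕ) (c : Fin p → ℝ), IsProbVec c ∧ Maj (kron X c) (kron Y c) := by
  let e : Fin (Fintype.card κ') ≃ κ' := (Fintype.equivFin κ').symm
  refine ⟨Fintype.card κ', d ∘ e, ⟨fun q => hd.1 _, ?_⟩, ?_⟩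
  · rw [show ∑ q, (d ∘ e) q = ∑ i, d i from Equiv.sum_comp e d]; exact hd.2
  · have heq : ∀ Z : ι → ℝ,
        (kron Z d) ∘ (Equiv.prodCongr (Equiv.refl ι) e) = kron Z (d ∘ e) := by
      intro Z; funext w; cases w; rfl
    have := maj_comp_equiv h (Equiv.prodCongr (Equiv.refl ι) e)
    rwa [heq X, heq Y] at this

theorem stmt4' {n : ℕ} (x y : Fin n → ℝ) (hx : IsProbVec x) (hy : IsProbVec y)
    (m n' : ℕ) (hm : 1 ≤ m) (hn' : 1 ≤ n') :
    (∃ (p : ℕ) (c : Fin p → ℝ), IsProbVec c ∧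
        Maj (kron (kpow x m) c) (kron (kpow y m) c)) →
      (∃ (p : ℕ) (c : Fin p → ℝ), IsProbVec c ∧
        Maj (kron (kpow x n') c) (kron (kpow y n') c)) := by
  rintro ⟨p, c, hc, hmaj⟩
  have hd := dvec_prob hx hy hc hm
  have rmaj := reduce_maj hx hy hc hm hmaj
  obtain ⟨p', c', hc', h'⟩ := transport x y _ hd rmaj
  exact ⟨p', c', hc', lift hx hy hc' h' n'⟩


/-- For probability vectors `x, y` and positive integers `m, n'`:
`x^{⊗m} ≺_T y^{⊗m}` iff `x^{⊗n'} ≺_T y^{⊗n'}`, where `u ≺_T v` means `u ⊗ c ≺ v ⊗ c` for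
some probability vector `c`. -/
theorem stmt4 {n : ℕ} (x y : Fin n → ℝ) (hx : IsProbVec x) (hy : IsProbVec y)
    (m n' : ℕ) (hm : 1 ≤ m) (hn' : 1 ≤ n') :
    (∃ (p : ℕ) (c : Fin p → ℝ), IsProbVec c ∧
        Maj (kron (kpow x m) c) (kron (kpow y m) c)) ↔
      (∃ (p : ℕ) (c : Fin p → ℝ), IsProbVec c ∧
        Maj (kron (kpow x n') c) (kron (kpow y n') c)) := by
  constructor
  · exact stmt4' x y hx hy m n' hm hn'
  · exact stmt4' x y hx hy n' m hn' hm
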